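/- Let A be a synaptic algebra and let a, b ∈ A with ab = ba. Then a ≤ b (synaptic order) if and only if a ≤ₛ b (spectral order). -/
import Mathlib


open Filter Topology

/-- The order-unit norm associated with an order relation `le` on a real algebra:
`‖a‖ = inf {λ > 0 : −λ ≤ a ≤ λ}`. -/
noncomputable def ouNorm {R : Type*} [Ring R] [Algebra ℝ R] (le : R → R → Prop) (a : R) : ℝ :=
  sInf {l : ℝ | 0 < l ∧ le (algebraMap ℝ R (-l)) a ∧ le a (algebraMap ℝ R l)}

/-- A synaptic algebra: a real linear subspace `A` (containing `1`) of a unital associative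
algebra `R` over `ℝ` (a complex algebra is in particular a real algebra), equipped with a
partial order making it an Archimedean partially ordered real linear space with order unit `1`,
and satisfying axioms SA1–SA8.  The square root (SA5) and the carrier (SA6) are bundled as
data together with their defining properties. -/
structure SynapticAlgebra (R : Type*) [Ring R] [Algebra ℝ R] where
  A : Submodule ℝ R
  one_mem : (1 : R) ∈ A
  /-- the synaptic order (meaningful on elements of `A`) -/
  le : R → R → Prop
  -- SA1 : Archimedean partially ordered real linear space with order unit 1
  le_refl : ∀ a ∈ A, le a a
  le_antisymm : ∀ a ∈ A, ∀ b ∈ A, le a b → le b a → a = b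
  le_trans : ∀ a ∈ A, ∀ b ∈ A, ∀ c ∈ A, le a b → le b c → le a c
  add_le_add_right : ∀ a ∈ A, ∀ b ∈ A, ∀ c ∈ A, le a b → le (a + c) (b + c)
  smul_nonneg : ∀ r : ℝ, 0 ≤ r → ∀ a ∈ A, le 0 a → le 0 (r • a)
  arch : ∀ a ∈ A, ∀ b ∈ A, (∀ n : ℕ, le ((n : ℝ) • a) b) → le a 0
  one_order_unit : ∀ a ∈ A, ∃ n : ℕ, le a ((n : ℝ) • (1 : R))
  zero_ne_one : (0 : R) ≠ 1
  -- SA2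
  sq_mem : ∀ a ∈ A, a * a ∈ A
  sq_nn : ∀ a ∈ A, le 0 (a * a)
  -- SA3
  quad_mem : ∀ a ∈ A, ∀ b ∈ A, a * b * a ∈ A
  quad_nn : ∀ a ∈ A, ∀ b ∈ A, le 0 a → le 0 b → le 0 (a * b * a)
  -- SA4
  quad_zero : ∀ a ∈ A, ∀ b ∈ A, le 0 b → a * b * a = 0 → a * b = 0 ∧ b * a = 0
  -- SA5 : square roots
  sqrt : R → R
  sqrt_mem : ∀ a ∈ A, le 0 a → sqrt a ∈ A
  sqrt_nn : ∀ a ∈ A, le 0 a → le 0 (sqrt a)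
  sqrt_sq : ∀ a ∈ A, le 0 a → sqrt a * sqrt a = a
  sqrt_bicomm : ∀ a ∈ A, le 0 a → ∀ b ∈ A, a * b = b * a → sqrt a * b = b * sqrt a
  sqrt_unique : ∀ a ∈ A, le 0 a → ∀ b ∈ A, le 0 b → b * b = a →
    (∀ c ∈ A, a * c = c * a → b * c = c * b) → b = sqrt a
  -- SA6 : carriers
  carr : R → R
  carr_mem : ∀ a ∈ A, carr a ∈ A
  carr_idem : ∀ a ∈ A, carr a * carr a = carr a
  carr_spec : ∀ a ∈ A, ∀ b ∈ A, (a * b = 0 ↔ carr a * b = 0)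
  -- SA7
  inv_exists : ∀ a ∈ A, le 1 a → ∃ b ∈ A, a * b = 1 ∧ b * a = 1
  -- SA8
  comm_closed : ∀ a ∈ A, ∀ b ∈ A, ∀ f : ℕ → R, (∀ n, f n ∈ A) →
    (∀ n, le (f n) (f (n + 1))) → (∀ m n, f m * f n = f n * f m) →
    (∀ n, f n * b = b * f n) →
    Filter.Tendsto (fun n => ouNorm le (a - f n)) Filter.atTop (nhds 0) →
    a * b = b * a

namespace SynapticAlgebra

variable {R : Type*} [Ring R] [Algebra ℝ R] (S : SynapticAlgebra R)

/-- `|a| := (a²)^{1/2}`. -/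
def absval (a : R) : R := S.sqrt (a * a)

/-- The positive part `a⁺ := (|a| + a)/2`. -/
noncomputable def pospart (a : R) : R := (2⁻¹ : ℝ) • (S.absval a + a)

/-- The spectral resolution `p_{a,λ} := 1 − ((a − λ)⁺)°`. -/
noncomputable def specProj (a : R) (l : ℝ) : R :=
  1 - S.carr (S.pospart (a - algebraMap ℝ R l))

/-- The spectral order: `a ≤ₛ b` iff `p_{b,λ} ≤ p_{a,λ}` for all real `λ`. -/
noncomputable def specLE (a b : R) : Prop :=
  ∀ l : ℝ, S.le (S.specProj b l) (S.specProj a l)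

/-- Projections of the synaptic algebra. -/
def IsProj (p : R) : Prop := p ∈ S.A ∧ p * p = p

/-- The set `E = {e ∈ A : 0 ≤ e ≤ 1}` of effects. -/
def effects : Set R := {e | e ∈ S.A ∧ S.le 0 e ∧ S.le e 1}

/-- `p` is the infimum of the set `T` in the orthomodular lattice `P` of projections. -/
def IsProjInf (p : R) (T : Set R) : Prop :=
  S.IsProj p ∧ (∀ q ∈ T, S.le p q) ∧ ∀ r, S.IsProj r → (∀ q ∈ T, S.le r q) → S.le r p

/-- `p` is the supremum of the set `T` in the orthomodular lattice `P` of projections. -/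
def IsProjSup (p : R) (T : Set R) : Prop :=
  S.IsProj p ∧ (∀ q ∈ T, S.le q p) ∧ ∀ r, S.IsProj r → (∀ q ∈ T, S.le q r) → S.le p r

/-- A Banach (norm-complete) synaptic algebra: every Cauchy sequence in `A`
(w.r.t. the order-unit norm) converges in norm to an element of `A`. -/
noncomputable def IsBanach : Prop :=
  ∀ f : ℕ → R, (∀ n, f n ∈ S.A) →
    (∀ ε : ℝ, 0 < ε → ∃ N : ℕ, ∀ m ≥ N, ∀ n ≥ N, ouNorm S.le (f m - f n) < ε) →
    ∃ a ∈ S.A, Filter.Tendsto (fun n => ouNorm S.le (a - f n)) Filter.atTop (nhds 0)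

/-- The `λ`-eigenprojection `d_{a,λ} := 1 − (a − λ)°`. -/
noncomputable def eigenProj (a : R) (l : ℝ) : R := 1 - S.carr (a - algebraMap ℝ R l)

/-- The bicommutant `CC(a)` (within `A`). -/
def Bicomm (a : R) : Set R :=
  {b | b ∈ S.A ∧ ∀ c ∈ S.A, a * c = c * a → b * c = c * b}

/-- Projections `p` and `q` are exchanged by a symmetry (`s² = 1`, `sps = q`). -/
def ExchBySymm (p q : R) : Prop := ∃ s ∈ S.A, s * s = 1 ∧ s * p * s = q

/-- The dimension equivalence on projections: a finite chain of projections, consecutive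
ones exchanged by symmetries. -/
def DimEquiv (p q : R) : Prop :=
  ∃ (n : ℕ) (c : ℕ → R), c 0 = p ∧ c n = q ∧ (∀ i ≤ n, S.IsProj (c i)) ∧
    ∀ i < n, S.ExchBySymm (c i) (c (i + 1))

/-- `A` is of finite type iff every projection is finite. -/
def FiniteType : Prop :=
  ∀ p, S.IsProj p → ∀ q, S.IsProj q → S.DimEquiv q p → S.le q p → q = p

/-- The projection lattice `P` is a complete orthomodular lattice: every set of projections
has an infimum and a supremum in `P`. -/
def ProjComplete : Prop :=
  ∀ T : Set R, (∀ p ∈ T, S.IsProj p) →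
    (∃ q, S.IsProjInf q T) ∧ (∃ q, S.IsProjSup q T)

/-- A bounded resolution of identity with bound `K`. -/
def IsBoundedResId (p : ℝ → R) (K : ℝ) : Prop :=
  0 ≤ K ∧ (∀ l, S.IsProj (p l)) ∧
  (∀ l, l < -K → p l = 0) ∧ (∀ l, K ≤ l → p l = 1) ∧
  (∀ l l', l ≤ l' → S.le (p l) (p l')) ∧
  (∀ l, S.IsProjInf (p l) {x | ∃ l' > l, x = p l'})

end SynapticAlgebra

/-- `c` is a regular involution on the subset `T` of the poset `(T, le')`. -/
def IsRegInvPoset {R : Type*} (le' : R → R → Prop) (T : Set R) (c : R → R) : Prop :=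
  (∀ a ∈ T, c a ∈ T) ∧ (∀ a ∈ T, c (c a) = a) ∧
  (∀ a ∈ T, ∀ b ∈ T, le' a b → le' (c b) (c a)) ∧
  (∀ a ∈ T, ∀ b ∈ T, le' a (c a) → le' b (c b) → le' a (c b))

/-- `(T, le', c, 0, 1)` is a Kleene poset: a bounded poset with a regular involution. -/
def IsKleene {R : Type*} [Zero R] [One R] (le' : R → R → Prop) (T : Set R) (c : R → R) : Prop :=
  IsRegInvPoset le' T c ∧ (0 : R) ∈ T ∧ (1 : R) ∈ T ∧ ∀ a ∈ T, le' 0 a ∧ le' a 1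

/-- Every pair of elements of `T` has an infimum and a supremum in `(T, le')`. -/
def HasBinSupInf {R : Type*} (le' : R → R → Prop) (T : Set R) : Prop :=
  ∀ a ∈ T, ∀ b ∈ T,
    (∃ m ∈ T, le' m a ∧ le' m b ∧ ∀ x ∈ T, le' x a → le' x b → le' x m) ∧
    (∃ j ∈ T, le' a j ∧ le' b j ∧ ∀ x ∈ T, le' a x → le' b x → le' j x)

section Toolkit

namespace SynapticAlgebra

variable {R : Type*} [Ring R] [Algebra ℝ R] (S : SynapticAlgebra R)

/-! ### Basic order lemmas -/

lemma mem_one : (1 : R) ∈ S.A := S.one_mem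

lemma le_refl' {a : R} (ha : a ∈ S.A) : S.le a a := S.le_refl a ha

lemma trans' {a b c : R} (ha : a ∈ S.A) (hb : b ∈ S.A) (hc : c ∈ S.A)
    (h1 : S.le a b) (h2 : S.le b c) : S.le a c := S.le_trans a ha b hb c hc h1 h2

lemma sub_nonneg_iff {a b : R} (ha : a ∈ S.A) (hb : b ∈ S.A) :
    S.le a b ↔ S.le 0 (b - a) := by
  constructor
  · intro h
    have := S.add_le_add_right a ha b hb (-a) (S.A.neg_mem ha) h
    simpa [sub_eq_add_neg] using this
  · intro h
    have := S.add_le_add_right 0 (S.A.zero_mem) (b - a) (S.A.sub_mem hb ha) a ha h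
    simpa using this

lemma le_of_sub_nonneg {a b : R} (ha : a ∈ S.A) (hb : b ∈ S.A)
    (h : S.le 0 (b - a)) : S.le a b := (S.sub_nonneg_iff ha hb).2 h

lemma sub_nonneg_of_le {a b : R} (ha : a ∈ S.A) (hb : b ∈ S.A)
    (h : S.le a b) : S.le 0 (b - a) := (S.sub_nonneg_iff ha hb).1 h

lemma add_nonneg' {a b : R} (ha : a ∈ S.A) (hb : b ∈ S.A)
    (h1 : S.le 0 a) (h2 : S.le 0 b) : S.le 0 (a + b) := by
  have h3 : S.le b (a + b) := by
    have := S.add_le_add_right 0 S.A.zero_mem a ha b hb h1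
    simpa using this
  exact S.trans' S.A.zero_mem hb (S.A.add_mem ha hb) h2 h3

lemma smul_nonneg' {r : ℝ} (hr : 0 ≤ r) {a : R} (ha : a ∈ S.A) (h : S.le 0 a) :
    S.le 0 (r • a) := S.smul_nonneg r hr a ha h

lemma one_nn : S.le 0 (1 : R) := by
  have := S.sq_nn 1 S.one_mem
  simpa using this

lemma proj_nn {p : R} (hp : p ∈ S.A) (hpp : p * p = p) : S.le 0 p := by
  have := S.sq_nn p hp
  rwa [hpp] at this

lemma smul_le_smul {r : ℝ} (hr : 0 ≤ r) {a b : R} (ha : a ∈ S.A) (hb : b ∈ S.A)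
    (h : S.le a b) : S.le (r • a) (r • b) := by
  apply S.le_of_sub_nonneg (S.A.smul_mem r ha) (S.A.smul_mem r hb)
  have := S.smul_nonneg' hr (S.A.sub_mem hb ha) (S.sub_nonneg_of_le ha hb h)
  rwa [smul_sub] at this

lemma add_le_add' {a b c d : R} (ha : a ∈ S.A) (hb : b ∈ S.A) (hc : c ∈ S.A)
    (hd : d ∈ S.A) (h1 : S.le a b) (h2 : S.le c d) : S.le (a + c) (b + d) := by
  apply S.le_of_sub_nonneg (S.A.add_mem ha hc) (S.A.add_mem hb hd)
  have := S.add_nonneg' (S.A.sub_mem hb ha) (S.A.sub_mem hd hc)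
      (S.sub_nonneg_of_le ha hb h1) (S.sub_nonneg_of_le hc hd h2)
  have e : b - a + (d - c) = b + d - (a + c) := by abel
  rwa [e] at this

lemma nonpos_of_neg_nonneg {a : R} (ha : a ∈ S.A) (h : S.le 0 (-a)) : S.le a 0 := by
  apply (S.sub_nonneg_iff ha S.A.zero_mem).2
  simpa using h

lemma neg_nonneg_of_nonpos {a : R} (ha : a ∈ S.A) (h : S.le a 0) : S.le 0 (-a) := by
  have := (S.sub_nonneg_iff ha S.A.zero_mem).1 h
  simpa using this

/-- Archimedean property in `ε`-form. -/
lemma nonneg_of_forall_eps {a : R} (ha : a ∈ S.A)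
    (h : ∀ ε : ℝ, 0 < ε → S.le 0 (a + ε • 1)) : S.le 0 a := by
  have hna : -a ∈ S.A := S.A.neg_mem ha
  have key : ∀ n : ℕ, S.le ((n : ℝ) • (-a)) 1 := by
    intro n
    rcases Nat.eq_zero_or_pos n with h0 | hn
    · subst h0
      simpa using S.one_nn
    · have hn' : (0 : ℝ) < (n : ℝ) := by exact_mod_cast hn
      have h1 := h ((n : ℝ)⁻¹) (by positivity)
      have h2 := S.smul_nonneg' (le_of_lt hn')
          (S.A.add_mem ha (S.A.smul_mem _ S.one_mem)) h1
      apply S.le_of_sub_nonneg (S.A.smul_mem _ hna) S.one_mem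
      have e : (n : ℝ) • (a + (n : ℝ)⁻¹ • (1 : R)) = 1 - (n : ℝ) • (-a) := by
        rw [smul_add, smul_smul, mul_inv_cancel₀ (ne_of_gt hn'), one_smul]
        simp [smul_neg]
        abel
      rwa [e] at h2
  have := S.arch (-a) hna 1 S.one_mem key
  have h2 := S.neg_nonneg_of_nonpos hna this
  simpa using h2

lemma le_of_forall_eps {a b : R} (ha : a ∈ S.A) (hb : b ∈ S.A)
    (h : ∀ ε : ℝ, 0 < ε → S.le a (b + ε • 1)) : S.le a b := by
  apply S.le_of_sub_nonneg ha hb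
  apply S.nonneg_of_forall_eps (S.A.sub_mem hb ha)
  intro ε hε
  have := S.sub_nonneg_of_le ha (S.A.add_mem hb (S.A.smul_mem _ S.one_mem)) (h ε hε)
  have e : b + ε • (1 : R) - a = b - a + ε • 1 := by abel
  rwa [e] at this

lemma smul_one_le_smul_one {r s : ℝ} (h : r ≤ s) : S.le (r • (1 : R)) (s • (1 : R)) := by
  apply S.le_of_sub_nonneg (S.A.smul_mem _ S.one_mem) (S.A.smul_mem _ S.one_mem)
  have := S.smul_nonneg' (sub_nonneg.2 h) S.one_mem S.one_nn
  rwa [sub_smul] at this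

/-- Every element is bounded above and below by multiples of `1`. -/
lemma bound_exists {a : R} (ha : a ∈ S.A) :
    ∃ M : ℝ, 0 < M ∧ S.le a (M • 1) ∧ S.le ((-M) • 1) a := by
  obtain ⟨n, hn⟩ := S.one_order_unit a ha
  obtain ⟨k, hk⟩ := S.one_order_unit (-a) (S.A.neg_mem ha)
  refine ⟨max (n : ℝ) (k : ℝ) + 1, by positivity, ?_, ?_⟩
  · exact S.trans' ha (S.A.smul_mem _ S.one_mem) (S.A.smul_mem _ S.one_mem) hn
      (S.smul_one_le_smul_one (by
        have : (n : ℝ) ≤ max (n : ℝ) (k : ℝ) := le_max_left _ _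
        push_cast
        linarith [le_max_left (n:ℝ) (k:ℝ)]))
  · have h1 : S.le (-a) ((max (n : ℝ) (k : ℝ) + 1) • (1 : R)) :=
      S.trans' (S.A.neg_mem ha) (S.A.smul_mem _ S.one_mem) (S.A.smul_mem _ S.one_mem) hk
        (S.smul_one_le_smul_one (by push_cast; linarith [le_max_right (n:ℝ) (k:ℝ)]))
    apply S.le_of_sub_nonneg (S.A.smul_mem _ S.one_mem) ha
    have := S.sub_nonneg_of_le (S.A.neg_mem ha) (S.A.smul_mem _ S.one_mem) h1
    have e : (max (n:ℝ) (k:ℝ) + 1) • (1 : R) - -a = a - (-(max (n:ℝ) (k:ℝ) + 1)) • 1 := by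
      rw [neg_smul]; abel
    rwa [e] at this

/-! ### Ring-side lemmas -/

/-- A commuting product of elements of `A` lies in `A`. -/
lemma comm_mul_mem {a b : R} (ha : a ∈ S.A) (hb : b ∈ S.A) (h : a * b = b * a) :
    a * b ∈ S.A := by
  have e : a * b = (2⁻¹ : ℝ) • ((a + b) * (a + b) - a * a - b * b) := by
    have : (a + b) * (a + b) - a * a - b * b = a * b + a * b := by
      rw [add_mul, mul_add, mul_add, ← h]; abel
    rw [this, smul_add, ← add_smul]
    norm_num
  rw [e]
  exact S.A.smul_mem _ (S.A.sub_mem (S.A.sub_mem (S.sq_mem _ (S.A.add_mem ha hb))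
    (S.sq_mem a ha)) (S.sq_mem b hb))

/-- A commuting product of nonnegative elements is nonnegative. -/
lemma comm_mul_nonneg {a b : R} (ha : a ∈ S.A) (hb : b ∈ S.A)
    (hann : S.le 0 a) (hbnn : S.le 0 b) (h : a * b = b * a) : S.le 0 (a * b) := by
  set r := S.sqrt a with hr
  have hrm : r ∈ S.A := S.sqrt_mem a ha hann
  have hrn : S.le 0 r := S.sqrt_nn a ha hann
  have hrs : r * r = a := S.sqrt_sq a ha hann
  have hrb : r * b = b * r := S.sqrt_bicomm a ha hann b hb h
  have e : a * b = r * b * r := by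
    conv_lhs => rw [← hrs, mul_assoc, hrb, ← mul_assoc]
  rw [e]
  exact S.quad_nn r hrm b hb hrn hbnn

lemma eq_zero_of_sq_eq_zero {a : R} (ha : a ∈ S.A) (h : a * a = 0) : a = 0 := by
  have := S.quad_zero a ha 1 S.one_mem S.one_nn (by simpa using h)
  simpa using this.1

/-- Uniqueness of commuting nonnegative square roots. -/
lemma eq_of_sq_eq {b c : R} (hb : b ∈ S.A) (hc : c ∈ S.A) (hbn : S.le 0 b)
    (hcn : S.le 0 c) (hcomm : b * c = c * b) (hsq : b * b = c * c) : b = c := by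
  set e := b - c with he
  have hem : e ∈ S.A := S.A.sub_mem hb hc
  have heb : Commute e b := by
    show e * b = b * e
    rw [he, sub_mul, mul_sub, hcomm]
  have hec : Commute e c := by
    show e * c = c * e
    rw [he, sub_mul, mul_sub, hcomm]
  have hee : e * e ∈ S.A := S.sq_mem e hem
  have he2b : S.le 0 (e * e * b) :=
    S.comm_mul_nonneg hee hb (S.sq_nn e hem) hbn (heb.mul_left heb).eq
  have he2c : S.le 0 (e * e * c) :=
    S.comm_mul_nonneg hee hc (S.sq_nn e hem) hcn (hec.mul_left hec).eq
  have hsum : e * e * b + e * e * c = 0 := by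
    have h1 : e * (b + c) = 0 := by
      rw [he]
      rw [sub_mul, mul_add, mul_add, hcomm, hsq]
      abel
    calc e * e * b + e * e * c = e * (e * (b + c)) := by noncomm_ring
    _ = 0 := by rw [h1, mul_zero]
  have hb0 : e * e * b = 0 := by
    have hmem1 : e * e * b ∈ S.A := S.comm_mul_mem hee hb (heb.mul_left heb).eq
    have hmem2 : e * e * c ∈ S.A := S.comm_mul_mem hee hc (hec.mul_left hec).eq
    have hle : S.le (e * e * b) 0 := by
      apply S.nonpos_of_neg_nonneg hmem1
      have : -(e * e * b) = e * e * c := by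
        rw [neg_eq_iff_add_eq_zero]; exact hsum
      rw [this]; exact he2c
    exact S.le_antisymm _ hmem1 _ S.A.zero_mem hle (by simpa using he2b)
  have hc0 : e * e * c = 0 := by rw [← hsum, hb0]; abel
  have he3 : e * e * e = 0 := by
    have : e * e * e = e * e * b - e * e * c := by rw [he]; noncomm_ring
    rw [this, hb0, hc0, sub_zero]
  have he4 : (e * e) * (e * e) = 0 := by
    calc (e * e) * (e * e) = e * (e * e * e) := by noncomm_ring
    _ = 0 := by rw [he3, mul_zero]
  have h2 : e * e = 0 := S.eq_zero_of_sq_eq_zero hee he4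
  have h1 : e = 0 := S.eq_zero_of_sq_eq_zero hem h2
  have := sub_eq_zero.1 (he ▸ h1)
  exact this

/-- Positive inverses: if `ε • 1 ≤ a` then `a` has a nonnegative inverse in `A`
commuting with everything that commutes with `a`. -/
lemma inv_nonneg_exists {a : R} (ha : a ∈ S.A) {ε : ℝ} (hε : 0 < ε)
    (h : S.le (ε • 1) a) : ∃ t ∈ S.A, a * t = 1 ∧ t * a = 1 ∧ S.le 0 t ∧
      (∀ x : R, a * x = x * a → t * x = x * t) := by
  have hann : S.le 0 a :=
    S.trans' S.A.zero_mem (S.A.smul_mem _ S.one_mem) ha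
      (S.smul_nonneg' hε.le S.one_mem S.one_nn) h
  have hb : S.le 1 (ε⁻¹ • a) := by
    have := S.smul_le_smul (r := ε⁻¹) (by positivity) (S.A.smul_mem _ S.one_mem) ha h
    rwa [smul_smul, inv_mul_cancel₀ hε.ne', one_smul] at this
  obtain ⟨u, hu, hu1, hu2⟩ := S.inv_exists (ε⁻¹ • a) (S.A.smul_mem _ ha) hb
  set t := ε⁻¹ • u with ht
  have htm : t ∈ S.A := S.A.smul_mem _ hu
  have h1 : a * t = 1 := by
    rw [ht, mul_smul_comm, ← smul_mul_assoc, hu1]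
  have h2 : t * a = 1 := by
    rw [ht, smul_mul_assoc, ← mul_smul_comm, hu2]
  have hcommt : ∀ x : R, a * x = x * a → t * x = x * t := by
    intro x hx
    calc t * x = t * x * (a * t) := by rw [h1, mul_one]
    _ = t * (x * a) * t := by noncomm_ring
    _ = t * (a * x) * t := by rw [hx]
    _ = (t * a) * (x * t) := by noncomm_ring
    _ = x * t := by rw [h2, one_mul]
  refine ⟨t, htm, h1, h2, ?_, hcommt⟩
  set r := S.sqrt a with hr
  have hrm : r ∈ S.A := S.sqrt_mem a ha hann
  have hra : r * a = a * r := S.sqrt_bicomm a ha hann a ha rfl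
  have hrs : r * r = a := S.sqrt_sq a ha hann
  have htr : t * r = r * t := hcommt r hra.symm
  have hw2 : (r * t) * (r * t) = t := by
    calc (r * t) * (r * t) = r * (t * r) * t := by noncomm_ring
    _ = r * (r * t) * t := by rw [htr]
    _ = (r * r) * t * t := by noncomm_ring
    _ = (a * t) * t := by rw [hrs]
    _ = t := by rw [h1, one_mul]
  have := S.sq_nn (r * t) (S.comm_mul_mem hrm htm htr.symm)
  rwa [hw2] at this

/-! ### Absolute value -/

lemma absval_mem {a : R} (ha : a ∈ S.A) : S.absval a ∈ S.A :=
  S.sqrt_mem _ (S.sq_mem a ha) (S.sq_nn a ha)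

lemma absval_nn {a : R} (ha : a ∈ S.A) : S.le 0 (S.absval a) :=
  S.sqrt_nn _ (S.sq_mem a ha) (S.sq_nn a ha)

lemma absval_sq {a : R} (ha : a ∈ S.A) : S.absval a * S.absval a = a * a :=
  S.sqrt_sq _ (S.sq_mem a ha) (S.sq_nn a ha)

lemma absval_comm {a : R} (ha : a ∈ S.A) {x : R} (hx : x ∈ S.A)
    (h : a * x = x * a) : S.absval a * x = x * S.absval a := by
  apply S.sqrt_bicomm _ (S.sq_mem a ha) (S.sq_nn a ha) x hx
  calc a * a * x = a * (x * a) := by rw [mul_assoc, h]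
  _ = x * (a * a) := by rw [← mul_assoc, h, mul_assoc]

lemma absval_comm_self {a : R} (ha : a ∈ S.A) : S.absval a * a = a * S.absval a :=
  S.absval_comm ha ha rfl

/-- The cube-root lemma: if `w³ ≥ 0` then `w ≥ 0`. -/
lemma nonneg_of_cube_nonneg {w : R} (hw : w ∈ S.A) (h : S.le 0 (w * w * w)) :
    S.le 0 w := by
  set u := S.absval w with hu
  have hum : u ∈ S.A := S.absval_mem hw
  have hun : S.le 0 u := S.absval_nn hw
  have husq : u * u = w * w := S.absval_sq hw
  have huw : Commute u w := S.absval_comm_self hw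
  have huu : Commute u u := Commute.refl u
  -- u³ ≥ 0
  have hu3m : u * u * u ∈ S.A := S.comm_mul_mem (S.sq_mem u hum) hum (huu.mul_left huu).eq
  have hw3m : w * w * w ∈ S.A := by
    have : Commute (w * w) w := ((Commute.refl w).mul_left (Commute.refl w))
    exact S.comm_mul_mem (S.sq_mem w hw) hw this.eq
  have hu3n : S.le 0 (u * u * u) :=
    S.comm_mul_nonneg (S.sq_mem u hum) hum (S.sq_nn u hum) hun (huu.mul_left huu).eq
  -- (u³)² = (w³)²
  have hsq6 : (u * u * u) * (u * u * u) = (w * w * w) * (w * w * w) := by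
    calc (u * u * u) * (u * u * u) = (u * u) * ((u * u) * (u * u)) := by noncomm_ring
    _ = (w * w) * ((w * w) * (w * w)) := by rw [husq]
    _ = (w * w * w) * (w * w * w) := by noncomm_ring
  -- u³ and w³ commute
  have hcomm3 : Commute (u * u * u) (w * w * w) := by
    have h1 : Commute u (w * w * w) :=
      (huw.mul_right huw).mul_right huw
    exact (h1.mul_left h1).mul_left h1
  have h3eq : u * u * u = w * w * w := S.eq_of_sq_eq hu3m hw3m hu3n h hcomm3.eq hsq6
  -- x' := u - w
  set x := u - w with hx
  have hxm : x ∈ S.A := S.A.sub_mem hum hw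
  have hxu : Commute x u := (Commute.refl u).sub_left huw.symm
  have hxw : Commute x w := huw.sub_left (Commute.refl w)
  -- x * (u + w) = 0
  have hE2 : x * (u + w) = 0 := by
    have : x * (u + w) = u * u - w * w + (u * w - u * w) := by
      rw [hx, sub_mul, mul_add, mul_add, huw.eq]
      abel
    rw [this, husq]
    abel
  -- x * (u*u) = 0
  have hE1 : x * (u * u + u * w + w * w) = 0 := by
    have expand : x * (u * u + u * w + w * w) = u * u * u - w * w * w := by
      rw [hx, sub_mul]
      have l1 : u * (u * u + u * w + w * w) = u * u * u + u * u * w + u * (w * w) := by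
        noncomm_ring
      have l2 : w * (u * u + u * w + w * w) = w * (u * u) + w * (u * w) + w * w * w := by
        noncomm_ring
      rw [l1, l2]
      have c1 : w * (u * u) = u * u * w := (huw.symm.mul_right huw.symm).eq
      have c2 : w * (u * w) = u * (w * w) := by
        rw [← mul_assoc, huw.symm.eq, mul_assoc]
      rw [c1, c2]
      abel
    rw [expand, h3eq]
    abel
  have hxu2 : x * (u * u) = 0 := by
    have hE2u : x * (u * u + u * w) = 0 := by
      have : x * (u * u + u * w) = x * (u + w) * u := by
        rw [mul_assoc, add_mul, huw.symm.eq]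
      rw [this, hE2, zero_mul]
    have : x * (u * u + u * w + w * w) = x * (u * u + u * w) + x * (u * u) := by
      conv_lhs => rw [← husq]
      rw [mul_add]
    rw [hE1, hE2u, zero_add] at this
    exact this.symm
  have hxu0 : x * u = 0 := by
    apply S.eq_zero_of_sq_eq_zero (S.comm_mul_mem hxm hum hxu.eq)
    calc (x * u) * (x * u) = x * (u * x) * u := by noncomm_ring
    _ = x * (x * u) * u := by rw [← hxu.eq]
    _ = x * (x * (u * u)) := by noncomm_ring
    _ = 0 := by rw [hxu2, mul_zero]
  have hxw0 : x * w = 0 := by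
    have := hE2
    rw [mul_add, hxu0, zero_add] at this
    exact this
  have hx0 : x = 0 := by
    apply S.eq_zero_of_sq_eq_zero hxm
    calc x * x = x * u - x * w := by rw [hx, mul_sub]
    _ = 0 := by rw [hxu0, hxw0, sub_self]
  have : u = w := by rwa [hx, sub_eq_zero] at hx0
  rwa [this] at hun

/-! ### The positive part -/

lemma pospart_mem {a : R} (ha : a ∈ S.A) : S.pospart a ∈ S.A :=
  S.A.smul_mem _ (S.A.add_mem (S.absval_mem ha) ha)

lemma absval_add_nn {a : R} (ha : a ∈ S.A) : S.le 0 (S.absval a + a) := by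
  set s := S.absval a with hs
  set w := s + a with hw
  have hsm : s ∈ S.A := S.absval_mem ha
  have hsa : Commute s a := S.absval_comm_self ha
  have hwm : w ∈ S.A := S.A.add_mem hsm ha
  have hsq : s * s = a * a := S.absval_sq ha
  have hws : Commute w s := (Commute.refl s).add_left hsa.symm
  apply S.nonneg_of_cube_nonneg hwm
  -- w³ = 2 • (w * w * s)
  have hww : w * w = (2 : ℝ) • (s * w) := by
    have : w * w = s * s + s * a + a * s + a * a := by
      rw [hw]; noncomm_ring
    rw [this, hsq, ← hsa.eq]
    have : a * a + s * a + s * a + a * a = (2:ℝ) • (s * a + a * a) := by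
      rw [two_smul]; abel
    rw [this]
    congr 1
    rw [hw, mul_add, hsq]
    abel
  have hcube : w * w * w = (2 : ℝ) • ((w * w) * s) := by
    calc w * w * w = w * (w * w) := by noncomm_ring
    _ = w * ((2:ℝ) • (s * w)) := by rw [hww]
    _ = (2:ℝ) • (w * s * w) := by rw [mul_smul_comm, ← mul_assoc]
    _ = (2:ℝ) • ((w * w) * s) := by rw [hws.eq, mul_assoc, (hws.mul_left hws).eq]
  rw [hcube]
  apply S.smul_nonneg' (by norm_num)
  · exact S.comm_mul_mem (S.sq_mem w hwm) hsm ((hws.mul_left hws).eq)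
  · exact S.comm_mul_nonneg (S.sq_mem w hwm) hsm (S.sq_nn w hwm)
      (S.absval_nn ha) ((hws.mul_left hws).eq)

lemma absval_sub_nn {a : R} (ha : a ∈ S.A) : S.le 0 (S.absval a - a) := by
  have hna : -a ∈ S.A := S.A.neg_mem ha
  have habs : S.absval (-a) = S.absval a := by
    unfold absval
    congr 1
    noncomm_ring
  have := S.absval_add_nn hna
  rwa [habs, ← sub_eq_add_neg] at this

lemma pospart_nn {a : R} (ha : a ∈ S.A) : S.le 0 (S.pospart a) :=
  S.smul_nonneg' (by norm_num) (S.A.add_mem (S.absval_mem ha) ha) (S.absval_add_nn ha)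

lemma le_pospart {a : R} (ha : a ∈ S.A) : S.le a (S.pospart a) := by
  apply S.le_of_sub_nonneg ha (S.pospart_mem ha)
  have e : S.pospart a - a = (2⁻¹ : ℝ) • (S.absval a - a) := by
    show (2⁻¹ : ℝ) • (S.absval a + a) - a = (2⁻¹ : ℝ) • (S.absval a - a)
    module
  rw [e]
  exact S.smul_nonneg' (by norm_num) (S.A.sub_mem (S.absval_mem ha) ha) (S.absval_sub_nn ha)

/-- `a⁺ · (a⁺ - a) = 0`. -/
lemma pospart_mul_negpart {a : R} (ha : a ∈ S.A) :
    S.pospart a * (S.pospart a - a) = 0 ∧ (S.pospart a - a) * S.pospart a = 0 := by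
  set s := S.absval a with hs
  have hsa : Commute s a := S.absval_comm_self ha
  have hsq : s * s = a * a := S.absval_sq ha
  have e1 : S.pospart a = (2⁻¹ : ℝ) • (s + a) := rfl
  have e2 : S.pospart a - a = (2⁻¹ : ℝ) • (s - a) := by
    rw [e1]; module
  constructor
  · rw [e2, e1, smul_mul_smul_comm]
    have : (s + a) * (s - a) = 0 := by
      rw [add_mul, mul_sub, mul_sub, hsq, ← hsa.eq]
      abel
    rw [this, smul_zero]
  · rw [e2, e1, smul_mul_smul_comm]
    have : (s - a) * (s + a) = 0 := by
      rw [sub_mul, mul_add, mul_add, hsq, ← hsa.eq]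
      abel
    rw [this, smul_zero]

lemma pospart_comm {a : R} (ha : a ∈ S.A) {x : R} (hx : x ∈ S.A)
    (h : a * x = x * a) : S.pospart a * x = x * S.pospart a := by
  unfold pospart
  rw [smul_mul_assoc, mul_smul_comm]
  congr 1
  rw [add_mul, mul_add, S.absval_comm ha hx h, h]

lemma pospart_of_nonneg {a : R} (ha : a ∈ S.A) (h : S.le 0 a) : S.pospart a = a := by
  have habs : S.absval a = a :=
    S.eq_of_sq_eq (S.absval_mem ha) ha (S.absval_nn ha) h
      (S.absval_comm_self ha) (S.absval_sq ha)
  unfold pospart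
  rw [habs, ← two_smul ℝ a, smul_smul]
  norm_num

lemma pospart_of_nonpos {a : R} (ha : a ∈ S.A) (h : S.le a 0) : S.pospart a = 0 := by
  have hna : S.le 0 (-a) := S.neg_nonneg_of_nonpos ha h
  have habs : S.absval a = -a := by
    apply S.eq_of_sq_eq (S.absval_mem ha) (S.A.neg_mem ha) (S.absval_nn ha) hna
    · rw [mul_neg, neg_mul, S.absval_comm_self ha]
    · rw [neg_mul_neg, S.absval_sq ha]
  unfold pospart
  rw [habs]
  simp

/-! ### Carrier lemmas -/

/-- `c · c° = c`. -/
lemma mul_carr_self {c : R} (hc : c ∈ S.A) : c * S.carr c = c := by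
  have h1 : S.carr c * (1 - S.carr c) = 0 := by
    rw [mul_sub, mul_one, S.carr_idem c hc, sub_self]
  have := (S.carr_spec c hc (1 - S.carr c)
    (S.A.sub_mem S.one_mem (S.carr_mem c hc))).2 h1
  rw [mul_sub, mul_one, sub_eq_zero] at this
  exact this.symm

/-- The carrier commutes with every element of `A` commuting with `c`. -/
lemma carr_comm {c x : R} (hc : c ∈ S.A) (hx : x ∈ S.A) (h : c * x = x * c) :
    S.carr c * x = x * S.carr c := by
  set p := S.carr c with hp
  have hpm : p ∈ S.A := S.carr_mem c hc
  have hpp : p * p = p := S.carr_idem c hc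
  have hcp : c * p = c := S.mul_carr_self hc
  -- the Jordan element b = x(1-p) + (1-p)x
  have hxpm : x * p + p * x ∈ S.A := by
    have e : x * p + p * x = (x + p) * (x + p) - x * x - p * p := by noncomm_ring
    rw [e]
    exact S.A.sub_mem (S.A.sub_mem (S.sq_mem _ (S.A.add_mem hx hpm)) (S.sq_mem x hx))
      (S.sq_mem p hpm)
  have hbm : x + x - (x * p + p * x) ∈ S.A := S.A.sub_mem (S.A.add_mem hx hx) hxpm
  have hcb : c * (x + x - (x * p + p * x)) = 0 := by
    have e1 : c * (x * p) = x * c := by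
      rw [← mul_assoc, h, mul_assoc, hcp]
    have e2 : c * (p * x) = c * x := by rw [← mul_assoc, hcp]
    rw [mul_sub, mul_add, mul_add, e1, e2, h]
    abel
  have hpb := (S.carr_spec c hc _ hbm).1 hcb
  have hpxp : p * x * (1 - p) = 0 := by
    have e : p * (x + x - (x * p + p * x)) = p * x - p * x * p := by
      rw [mul_sub, mul_add, mul_add, ← mul_assoc, ← mul_assoc, hpp]
      abel
    rw [e] at hpb
    rw [mul_sub, mul_one, hpb]
  have hpx : p * x = p * x * p := by
    rw [mul_sub, mul_one, sub_eq_zero] at hpxp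
    exact hpxp
  have hpxm : p * x ∈ S.A := by rw [hpx]; exact S.quad_mem p hpm x hx
  have hxpm' : x * p ∈ S.A := by
    have : x * p = (x * p + p * x) - p * x := by abel
    rw [this]
    exact S.A.sub_mem hxpm hpxm
  set d := x * p - p * x * p with hd
  have hdm : d ∈ S.A := S.A.sub_mem hxpm' (S.quad_mem p hpm x hx)
  have hdd : d * d = 0 := by
    have e : d = (1 - p) * (x * p) := by rw [hd, sub_mul, one_mul, ← mul_assoc]
    rw [e]
    have : (1 - p) * (x * p) * ((1 - p) * (x * p))
        = (1 - p) * x * (p * (1 - p)) * (x * p) := by noncomm_ring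
    rw [this]
    have hp1 : p * (1 - p) = 0 := by rw [mul_sub, mul_one, hpp, sub_self]
    rw [hp1, mul_zero, zero_mul]
  have hd0 : d = 0 := S.eq_zero_of_sq_eq_zero hdm hdd
  have hxp : x * p = p * x * p := by rwa [hd, sub_eq_zero] at hd0
  rw [hxp, ← hpx]

/-- `c° · c = c`. -/
lemma carr_mul_self {c : R} (hc : c ∈ S.A) : S.carr c * c = c := by
  rw [S.carr_comm hc hc rfl, S.mul_carr_self hc]

lemma carr_nn {c : R} (hc : c ∈ S.A) : S.le 0 (S.carr c) :=
  S.proj_nn (S.carr_mem c hc) (S.carr_idem c hc)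

lemma carr_zero : S.carr (0 : R) = 0 := by
  have := (S.carr_spec 0 S.A.zero_mem 1 S.one_mem).1 (by simp)
  simpa using this

/-- If `ε•1 ≤ c` then `c° = 1`. -/
lemma carr_of_pos {c : R} (hc : c ∈ S.A) {ε : ℝ} (hε : 0 < ε)
    (h : S.le (ε • 1) c) : S.carr c = 1 := by
  obtain ⟨t, htm, hct, htc, htn, _⟩ := S.inv_nonneg_exists hc hε h
  calc S.carr c = S.carr c * (c * t) := by rw [hct, mul_one]
  _ = (S.carr c * c) * t := by rw [mul_assoc]
  _ = c * t := by rw [S.carr_mul_self hc]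
  _ = 1 := hct

/-! ### Order on projections -/

lemma proj_le_of_mul {p q : R} (hp : p ∈ S.A) (hq : q ∈ S.A) (hpp : p * p = p)
    (hqq : q * q = q) (h1 : p * q = p) (h2 : q * p = p) : S.le p q := by
  apply S.le_of_sub_nonneg hp hq
  have e : q - p = (1 - p) * q * (1 - p) := by
    have : (1 - p) * q * (1 - p) = q - p * q - (q * p - p * q * p) := by noncomm_ring
    rw [this, h1, h2, hpp]
    abel
  rw [e]
  exact S.quad_nn _ (S.A.sub_mem S.one_mem hp) q hq
    (S.proj_nn (S.A.sub_mem S.one_mem hp) (by noncomm_ring [hpp])) (S.proj_nn hq hqq)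

lemma proj_mul_of_le {p q : R} (hp : p ∈ S.A) (hq : q ∈ S.A) (hpp : p * p = p)
    (hqq : q * q = q) (h : S.le p q) : p * q = p ∧ q * p = p := by
  have h1q : (1 : R) - q ∈ S.A := S.A.sub_mem S.one_mem hq
  have h1qq : (1 - q) * (1 - q) = 1 - q := by noncomm_ring [hqq]
  have h1qn : S.le 0 (1 - q) := S.proj_nn h1q h1qq
  have hpn : S.le 0 p := S.proj_nn hp hpp
  have hqp : S.le 0 (q - p) := S.sub_nonneg_of_le hp hq h
  have t1 : S.le 0 ((1 - q) * (q - p) * (1 - q)) :=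
    S.quad_nn _ h1q _ (S.A.sub_mem hq hp) h1qn hqp
  have t2 : S.le 0 ((1 - q) * p * (1 - q)) := S.quad_nn _ h1q p hp h1qn hpn
  have e : (1 - q) * (q - p) * (1 - q) = -((1 - q) * p * (1 - q)) := by
    have : (1 - q) * q * (1 - q) = 0 := by
      have : (1 - q) * q = 0 := by rw [sub_mul, one_mul, hqq, sub_self]
      rw [this, zero_mul]
    have e2 : (1 - q) * (q - p) * (1 - q)
        = (1 - q) * q * (1 - q) - (1 - q) * p * (1 - q) := by noncomm_ring
    rw [e2, this, zero_sub]
  have hzero : (1 - q) * p * (1 - q) = 0 := by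
    have hm : (1 - q) * p * (1 - q) ∈ S.A := S.quad_mem _ h1q p hp
    apply S.le_antisymm _ hm _ S.A.zero_mem _ t2
    apply S.nonpos_of_neg_nonneg hm
    rw [← e]; exact t1
  have := S.quad_zero _ h1q p hp hpn hzero
  constructor
  · -- p * q = p from p * (1 - q) = 0
    have := this.2
    rw [mul_sub, mul_one, sub_eq_zero] at this
    exact this.symm
  · have := this.1
    rw [sub_mul, one_mul, sub_eq_zero] at this
    exact this.symm

/-! ### Lemma M : if `f` is a commuting projection with `d·f ≤ 0` then `d⁺·f = 0`. -/

lemma pospart_mul_eq_zero {d f : R} (hd : d ∈ S.A) (hf : f ∈ S.A)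
    (hff : f * f = f) (hcomm : d * f = f * d) (h : S.le (d * f) 0) :
    S.pospart d * f = 0 := by
  set dp := S.pospart d with hdp
  have hdpm : dp ∈ S.A := S.pospart_mem hd
  have hdpn : S.le 0 dp := S.pospart_nn hd
  have hdpd : dp * d = d * dp := by rw [hdp]; exact S.pospart_comm hd hd rfl
  have hdpf : dp * f = f * dp := by rw [hdp]; exact S.pospart_comm hd hf hcomm
  have hfn : S.le 0 f := S.proj_nn hf hff
  have hdfm : d * f ∈ S.A := S.comm_mul_mem hd hf hcomm
  -- dp * (d * f) = (dp * dp) * f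
  have key : dp * (d * f) = (dp * dp) * f := by
    have h1 : dp * d = dp * dp := by
      have h0 := (S.pospart_mul_negpart hd).1
      rw [mul_sub] at h0
      rw [hdp]
      exact (sub_eq_zero.mp h0).symm
    rw [← mul_assoc, h1]
  -- nonneg : (dp*dp)*f ≥ 0
  have hnn : S.le 0 ((dp * dp) * f) := by
    apply S.comm_mul_nonneg (S.sq_mem dp hdpm) hf (S.sq_nn dp hdpm) hfn
    have c : Commute dp f := hdpf
    exact (c.mul_left c).eq
  -- nonpos : dp * (d*f) ≤ 0
  have hnp : S.le (dp * (d * f)) 0 := by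
    have hdfc : dp * (d * f) = (d * f) * dp := by
      calc dp * (d * f) = (dp * d) * f := by rw [mul_assoc]
      _ = (d * dp) * f := by rw [hdpd]
      _ = d * (f * dp) := by rw [mul_assoc, ← hdpf]
      _ = (d * f) * dp := by rw [← mul_assoc]
    have hnegm : -(d * f) ∈ S.A := S.A.neg_mem hdfm
    have : S.le 0 (dp * (-(d * f))) := by
      apply S.comm_mul_nonneg hdpm hnegm hdpn (S.neg_nonneg_of_nonpos hdfm h)
      rw [mul_neg, neg_mul, hdfc]
    rw [mul_neg] at this
    apply S.nonpos_of_neg_nonneg _ this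
    rw [← mul_assoc]
    exact S.comm_mul_mem (S.comm_mul_mem hdpm hd hdpd) hf
      (by
        have c1 : Commute dp f := hdpf
        have c2 : Commute d f := hcomm
        exact (c1.mul_left c2).eq)
  -- conclude (dp*dp)*f = 0
  have hz : (dp * dp) * f = 0 := by
    have hm : (dp * dp) * f ∈ S.A := by
      apply S.comm_mul_mem (S.sq_mem dp hdpm) hf
      have c : Commute dp f := hdpf
      exact (c.mul_left c).eq
    apply S.le_antisymm _ hm _ S.A.zero_mem _ hnn
    rw [← key]
    exact hnp
  -- (dp*f)² = dp²*f
  apply S.eq_zero_of_sq_eq_zero (S.comm_mul_mem hdpm hf hdpf)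
  calc (dp * f) * (dp * f) = dp * (f * dp) * f := by noncomm_ring
  _ = dp * (dp * f) * f := by rw [← hdpf]
  _ = (dp * dp) * (f * f) := by noncomm_ring
  _ = (dp * dp) * f := by rw [hff]
  _ = 0 := hz

/-! ### Spectral projections -/

lemma shift_mem {a : R} (ha : a ∈ S.A) (l : ℝ) : a - algebraMap ℝ R l ∈ S.A := by
  rw [Algebra.algebraMap_eq_smul_one]
  exact S.A.sub_mem ha (S.A.smul_mem _ S.one_mem)

lemma specProj_mem {a : R} (ha : a ∈ S.A) (l : ℝ) : S.specProj a l ∈ S.A :=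
  S.A.sub_mem S.one_mem (S.carr_mem _ (S.pospart_mem (S.shift_mem ha l)))

lemma specProj_idem {a : R} (ha : a ∈ S.A) (l : ℝ) :
    S.specProj a l * S.specProj a l = S.specProj a l := by
  unfold specProj
  have h := S.carr_idem _ (S.pospart_mem (S.shift_mem ha l))
  set q := S.carr (S.pospart (a - algebraMap ℝ R l)) with hq
  have e : (1 - q) * (1 - q) = 1 - q - q + q * q := by noncomm_ring
  rw [e, h]
  abel

lemma specProj_nn {a : R} (ha : a ∈ S.A) (l : ℝ) : S.le 0 (S.specProj a l) :=
  S.proj_nn (S.specProj_mem ha l) (S.specProj_idem ha l)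

lemma specProj_comm {a : R} (ha : a ∈ S.A) {x : R} (hx : x ∈ S.A)
    (h : a * x = x * a) (l : ℝ) : S.specProj a l * x = x * S.specProj a l := by
  unfold specProj
  have hc : a - algebraMap ℝ R l ∈ S.A := S.shift_mem ha l
  have hcx : (a - algebraMap ℝ R l) * x = x * (a - algebraMap ℝ R l) := by
    rw [Algebra.algebraMap_eq_smul_one, sub_mul, mul_sub, h, smul_mul_assoc, mul_smul_comm,
      one_mul, mul_one]
  have hpx := S.pospart_comm hc hx hcx
  have := S.carr_comm (S.pospart_mem hc) hx hpx
  rw [sub_mul, mul_sub, one_mul, mul_one, this]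

lemma specProj_comm_self {a : R} (ha : a ∈ S.A) (l : ℝ) :
    S.specProj a l * a = a * S.specProj a l := S.specProj_comm ha ha rfl l

/-- `(a - λ)·(1 - p_λ) = (a-λ)⁺ ≥ 0`. -/
lemma shift_mul_compl {a : R} (ha : a ∈ S.A) (l : ℝ) :
    (a - algebraMap ℝ R l) * (1 - S.specProj a l)
      = S.pospart (a - algebraMap ℝ R l) := by
  set c := a - algebraMap ℝ R l with hcdef
  have hc : c ∈ S.A := S.shift_mem ha l
  have e : (1 : R) - S.specProj a l = S.carr (S.pospart c) := by
    unfold specProj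
    abel
  rw [e]
  set cp := S.pospart c with hcp
  have hcpm : cp ∈ S.A := S.pospart_mem hc
  have h1 : cp * S.carr cp = cp := S.mul_carr_self hcpm
  have h2 : (cp - c) * S.carr cp = 0 := by
    have hQ : S.carr cp * (cp - c) = 0 := by
      have h0 : cp * (cp - c) = 0 := by rw [hcp]; exact (S.pospart_mul_negpart hc).1
      exact (S.carr_spec cp hcpm _ (S.A.sub_mem hcpm hc)).1 h0
    have hcomm : (cp - c) * S.carr cp = S.carr cp * (cp - c) := by
      have hcc : cp * (cp - c) = (cp - c) * cp := by
        rw [hcp]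
        rw [mul_sub, sub_mul]
        rw [(S.pospart_comm hc hc rfl)]
      exact (S.carr_comm hcpm (S.A.sub_mem hcpm hc) hcc).symm
    rw [hcomm, hQ]
  calc c * S.carr cp = cp * S.carr cp - (cp - c) * S.carr cp := by
        conv_rhs => rw [sub_mul, sub_sub_cancel]
  _ = cp - 0 := by rw [h1, h2]
  _ = cp := sub_zero cp

/-- `(a - λ)·p_λ = -(a-λ)⁻ ≤ 0`. -/
lemma shift_mul_specProj {a : R} (ha : a ∈ S.A) (l : ℝ) :
    (a - algebraMap ℝ R l) * S.specProj a l
      = -(S.pospart (a - algebraMap ℝ R l) - (a - algebraMap ℝ R l)) := by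
  have h := S.shift_mul_compl ha l
  set c := a - algebraMap ℝ R l with hcdef
  have e : c * S.specProj a l = c - c * (1 - S.specProj a l) := by
    rw [mul_sub, mul_one]
    abel
  rw [e, h]
  abel

lemma shift_mul_specProj_nonpos {a : R} (ha : a ∈ S.A) (l : ℝ) :
    S.le ((a - algebraMap ℝ R l) * S.specProj a l) 0 := by
  rw [S.shift_mul_specProj ha l]
  have hc : a - algebraMap ℝ R l ∈ S.A := S.shift_mem ha l
  have hm : S.pospart (a - algebraMap ℝ R l) - (a - algebraMap ℝ R l) ∈ S.A :=
    S.A.sub_mem (S.pospart_mem hc) hc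
  apply S.nonpos_of_neg_nonneg (S.A.neg_mem hm)
  rw [neg_neg]
  exact S.sub_nonneg_of_le hc (S.pospart_mem hc) (S.le_pospart hc)

lemma shift_mul_compl_nonneg {a : R} (ha : a ∈ S.A) (l : ℝ) :
    S.le 0 ((a - algebraMap ℝ R l) * (1 - S.specProj a l)) := by
  rw [S.shift_mul_compl ha l]
  exact S.pospart_nn (S.shift_mem ha l)

/-- The fundamental vanishing lemma: if `x` commutes with `a` and
`(a - λ)·f ≤ 0` for a projection `f` commuting with `a`, then `Q_{a,λ} f = 0`. -/
lemma carr_pospart_mul_eq_zero {a f : R} (ha : a ∈ S.A) (hf : f ∈ S.A)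
    (hff : f * f = f) (hcomm : a * f = f * a) (l : ℝ)
    (h : S.le ((a - algebraMap ℝ R l) * f) 0) :
    S.carr (S.pospart (a - algebraMap ℝ R l)) * f = 0 := by
  set c := a - algebraMap ℝ R l with hcdef
  have hc : c ∈ S.A := S.shift_mem ha l
  have hcf : c * f = f * c := by
    rw [hcdef, Algebra.algebraMap_eq_smul_one, sub_mul, mul_sub, hcomm, smul_mul_assoc,
      mul_smul_comm, one_mul, mul_one]
  have h0 : S.pospart c * f = 0 := S.pospart_mul_eq_zero hc hf hff hcf h
  exact (S.carr_spec _ (S.pospart_mem hc) f hf).1 h0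

/-- Monotonicity data of the spectral resolution. -/
lemma specProj_mul_of_le {a : R} (ha : a ∈ S.A) {l l' : ℝ} (h : l ≤ l') :
    S.specProj a l' * S.specProj a l = S.specProj a l ∧
    S.specProj a l * S.specProj a l' = S.specProj a l := by
  set f := S.specProj a l with hfdef
  have hfm : f ∈ S.A := S.specProj_mem ha l
  have hff : f * f = f := S.specProj_idem ha l
  have hfa : a * f = f * a := (S.specProj_comm_self ha l).symm
  -- (a - l')·f ≤ 0
  have hkey : S.le ((a - algebraMap ℝ R l') * f) 0 := by
    have e : (a - algebraMap ℝ R l') * f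
        = (a - algebraMap ℝ R l) * f + (-((l' - l) • f)) := by
      simp only [Algebra.algebraMap_eq_smul_one, sub_mul, smul_mul_assoc, one_mul,
        sub_smul]
      abel
    rw [e]
    have t1 : S.le ((a - algebraMap ℝ R l) * f) 0 := S.shift_mul_specProj_nonpos ha l
    have t2 : S.le (-((l' - l) • f)) 0 := by
      apply S.nonpos_of_neg_nonneg (S.A.neg_mem (S.A.smul_mem _ hfm))
      rw [neg_neg]
      exact S.smul_nonneg' (by linarith) hfm (S.specProj_nn ha l)
    have hm1 : (a - algebraMap ℝ R l) * f ∈ S.A := by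
      apply S.comm_mul_mem (S.shift_mem ha l) hfm
      rw [Algebra.algebraMap_eq_smul_one, sub_mul, mul_sub, hfa, smul_mul_assoc, mul_smul_comm,
        one_mul, mul_one]
    have hm2 : -((l' - l) • f) ∈ S.A := S.A.neg_mem (S.A.smul_mem _ hfm)
    have := S.add_le_add' hm1 S.A.zero_mem hm2 S.A.zero_mem t1 t2
    simpa using this
  have hQf : S.carr (S.pospart (a - algebraMap ℝ R l')) * f = 0 :=
    S.carr_pospart_mul_eq_zero ha hfm hff hfa l' hkey
  -- Q_{l'} commutes with f
  have hQfcomm : S.carr (S.pospart (a - algebraMap ℝ R l')) * f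
      = f * S.carr (S.pospart (a - algebraMap ℝ R l')) := by
    have hc' : a - algebraMap ℝ R l' ∈ S.A := S.shift_mem ha l'
    have hcf : (a - algebraMap ℝ R l') * f = f * (a - algebraMap ℝ R l') := by
      rw [Algebra.algebraMap_eq_smul_one, sub_mul, mul_sub, hfa.symm, smul_mul_assoc,
        mul_smul_comm, one_mul, mul_one]
    exact S.carr_comm (S.pospart_mem hc') hfm (S.pospart_comm hc' hfm hcf)
  have hfQ : f * S.carr (S.pospart (a - algebraMap ℝ R l')) = 0 := by
    rw [← hQfcomm]; exact hQf
  constructor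
  · show (1 - S.carr (S.pospart (a - algebraMap ℝ R l'))) * f = f
    rw [sub_mul, one_mul, hQf, sub_zero]
  · show f * (1 - S.carr (S.pospart (a - algebraMap ℝ R l'))) = f
    rw [mul_sub, mul_one, hfQ, sub_zero]

lemma specProj_mono {a : R} (ha : a ∈ S.A) {l l' : ℝ} (h : l ≤ l') :
    S.le (S.specProj a l) (S.specProj a l') := by
  obtain ⟨h1, h2⟩ := S.specProj_mul_of_le ha h
  exact S.proj_le_of_mul (S.specProj_mem ha l) (S.specProj_mem ha l')
    (S.specProj_idem ha l) (S.specProj_idem ha l') h2 h1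

/-- If `a ≤ λ` then `p_{a,λ} = 1`. -/
lemma specProj_eq_one {a : R} (ha : a ∈ S.A) {l : ℝ} (h : S.le a (l • 1)) :
    S.specProj a l = 1 := by
  have hc : a - algebraMap ℝ R l ∈ S.A := S.shift_mem ha l
  have hnp : S.le (a - algebraMap ℝ R l) 0 := by
    rw [Algebra.algebraMap_eq_smul_one]
    apply S.nonpos_of_neg_nonneg (S.A.sub_mem ha (S.A.smul_mem _ S.one_mem))
    have := S.sub_nonneg_of_le ha (S.A.smul_mem _ S.one_mem) h
    rwa [neg_sub]
  have : S.pospart (a - algebraMap ℝ R l) = 0 := S.pospart_of_nonpos hc hnp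
  unfold specProj
  rw [this, S.carr_zero, sub_zero]

/-- If `λ' ≤ a` (as `λ'•1 ≤ a`) and `λ < λ'` then `p_{a,λ} = 0`. -/
lemma specProj_eq_zero {a : R} (ha : a ∈ S.A) {l l' : ℝ} (hll : l < l')
    (h : S.le (l' • 1) a) : S.specProj a l = 0 := by
  have hc : a - algebraMap ℝ R l ∈ S.A := S.shift_mem ha l
  have hpos : S.le ((l' - l) • 1) (a - algebraMap ℝ R l) := by
    rw [Algebra.algebraMap_eq_smul_one]
    apply S.le_of_sub_nonneg (S.A.smul_mem _ S.one_mem)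
      (S.A.sub_mem ha (S.A.smul_mem _ S.one_mem))
    have := S.sub_nonneg_of_le (S.A.smul_mem _ S.one_mem) ha h
    have e : a - l • (1:R) - (l' - l) • 1 = a - l' • 1 := by
      rw [sub_smul]; abel
    rw [e]
    exact this
  have hnn : S.le 0 (a - algebraMap ℝ R l) := by
    apply S.trans' S.A.zero_mem (S.A.smul_mem _ S.one_mem) hc _ hpos
    exact S.smul_nonneg' (by linarith) S.one_mem S.one_nn
  have hpp : S.pospart (a - algebraMap ℝ R l) = a - algebraMap ℝ R l :=
    S.pospart_of_nonneg hc hnn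
  have : S.carr (S.pospart (a - algebraMap ℝ R l)) = 1 := by
    rw [hpp]
    exact S.carr_of_pos hc (by linarith : (0:ℝ) < l' - l) hpos
  unfold specProj
  rw [this, sub_self]

/-! ### Sums -/

lemma le_sum {n : ℕ} {u v : ℕ → R} (hu : ∀ i, u i ∈ S.A) (hv : ∀ i, v i ∈ S.A)
    (h : ∀ i < n, S.le (u i) (v i)) :
    S.le (∑ i ∈ Finset.range n, u i) (∑ i ∈ Finset.range n, v i) := by
  induction n with
  | zero => simpa using S.le_refl' S.A.zero_mem
  | succ n ih =>
    rw [Finset.sum_range_succ, Finset.sum_range_succ]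
    exact S.add_le_add' (S.A.sum_mem fun i _ => hu i) (S.A.sum_mem fun i _ => hv i)
      (hu n) (hv n) (ih fun i hi => h i (by omega)) (h n (by omega))

/-! ### Estimates on spectral increments -/

lemma est_abstract {a x y : R} (ha : a ∈ S.A) (hx : x ∈ S.A) (hy : y ∈ S.A)
    (hxx : x * x = x) (hyy : y * y = y) (hxy : x * y = y) (hyx : y * x = y)
    (hax : a * x = x * a) (hay : a * y = y * a) {l l' : ℝ}
    (hu : S.le ((a - l' • 1) * x) 0) (hv : S.le 0 ((a - l • 1) * (1 - y))) :
    S.le (l • (x - y)) (a * (x - y)) ∧ S.le (a * (x - y)) (l' • (x - y)) := by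
  have hgm : x - y ∈ S.A := S.A.sub_mem hx hy
  have hgg : (x - y) * (x - y) = x - y := by
    have e : (x - y) * (x - y) = x * x - x * y - (y * x - y * y) := by noncomm_ring
    rw [e, hxx, hxy, hyx, hyy, sub_self, sub_zero]
  have hgnn : S.le 0 (x - y) := S.proj_nn hgm hgg
  have hag : a * (x - y) = (x - y) * a := by
    rw [mul_sub, sub_mul, hax, hay]
  have hagm : a * (x - y) ∈ S.A := S.comm_mul_mem ha hgm hag
  have hyg : y * (x - y) = 0 := by rw [mul_sub, hyx, hyy, sub_self]
  have hgy : (x - y) * y = 0 := by rw [sub_mul, hxy, hyy, sub_self]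
  have hxg : x * (x - y) = x - y := by rw [mul_sub, hxx, hxy]
  have hgx : (x - y) * x = x - y := by rw [sub_mul, hxx, hyx]
  have hsm1 : ∀ r : ℝ, a - r • (1 : R) ∈ S.A := fun r =>
    S.A.sub_mem ha (S.A.smul_mem _ S.one_mem)
  have ham : ∀ r : ℝ, ∀ z : R, a * z = z * a →
      (a - r • 1) * z = z * (a - r • 1) := by
    intro r z hz
    rw [sub_mul, mul_sub, hz, smul_mul_assoc, mul_smul_comm, one_mul, mul_one]
  have hamg : ∀ r : ℝ, (a - r • 1) * (x - y) = (x - y) * (a - r • 1) :=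
    fun r => ham r (x - y) hag
  have hexp : ∀ r : ℝ, (a - r • 1) * (x - y) = a * (x - y) - r • (x - y) := by
    intro r
    rw [sub_mul, smul_mul_assoc, one_mul]
  constructor
  · -- lower estimate
    have ha1y : a * (1 - y) = (1 - y) * a := by
      rw [mul_sub, sub_mul, mul_one, one_mul, hay]
    have hvm : (a - l • 1) * (1 - y) ∈ S.A :=
      S.comm_mul_mem (hsm1 l) (S.A.sub_mem S.one_mem hy) (ham l (1 - y) ha1y)
    have h1yg : (1 - y) * (x - y) = x - y := by
      rw [sub_mul, one_mul, hyg, sub_zero]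
    have hg1y : (x - y) * (1 - y) = x - y := by
      rw [mul_sub, mul_one, hgy, sub_zero]
    have hvg : ((a - l • 1) * (1 - y)) * (x - y) = (a - l • 1) * (x - y) := by
      rw [mul_assoc, h1yg]
    have hcommvg : ((a - l • 1) * (1 - y)) * (x - y)
        = (x - y) * ((a - l • 1) * (1 - y)) := by
      calc ((a - l • 1) * (1 - y)) * (x - y) = (a - l • 1) * (x - y) := hvg
      _ = (a - l • 1) * ((x - y) * (1 - y)) := by rw [hg1y]
      _ = ((a - l • 1) * (x - y)) * (1 - y) := by rw [mul_assoc]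
      _ = ((x - y) * (a - l • 1)) * (1 - y) := by rw [hamg l]
      _ = (x - y) * ((a - l • 1) * (1 - y)) := by rw [mul_assoc]
    have hnn : S.le 0 (((a - l • 1) * (1 - y)) * (x - y)) :=
      S.comm_mul_nonneg hvm hgm hv hgnn hcommvg
    rw [hvg, hexp l] at hnn
    exact S.le_of_sub_nonneg (S.A.smul_mem _ hgm) hagm hnn
  · -- upper estimate
    have hum : (a - l' • 1) * x ∈ S.A :=
      S.comm_mul_mem (hsm1 l') hx (ham l' x hax)
    have hug : ((a - l' • 1) * x) * (x - y) = (a - l' • 1) * (x - y) := by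
      rw [mul_assoc, hxg]
    have hcommug : ((a - l' • 1) * x) * (x - y)
        = (x - y) * ((a - l' • 1) * x) := by
      calc ((a - l' • 1) * x) * (x - y) = (a - l' • 1) * (x - y) := hug
      _ = (a - l' • 1) * ((x - y) * x) := by rw [hgx]
      _ = ((a - l' • 1) * (x - y)) * x := by rw [mul_assoc]
      _ = ((x - y) * (a - l' • 1)) * x := by rw [hamg l']
      _ = (x - y) * ((a - l' • 1) * x) := by rw [mul_assoc]
    have hnn : S.le 0 ((-((a - l' • 1) * x)) * (x - y)) := by
      apply S.comm_mul_nonneg (S.A.neg_mem hum) hgm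
        (S.neg_nonneg_of_nonpos hum hu) hgnn
      rw [neg_mul, mul_neg, hcommug]
    rw [neg_mul, hug, hexp l', neg_sub] at hnn
    exact S.le_of_sub_nonneg hagm (S.A.smul_mem _ hgm) hnn

lemma est_bounds {a : R} (ha : a ∈ S.A) {l l' : ℝ} (h : l ≤ l') :
    S.le (l • (S.specProj a l' - S.specProj a l))
        (a * (S.specProj a l' - S.specProj a l)) ∧
    S.le (a * (S.specProj a l' - S.specProj a l))
        (l' • (S.specProj a l' - S.specProj a l)) := by
  have hu := S.shift_mul_specProj_nonpos ha l'
  rw [Algebra.algebraMap_eq_smul_one] at hu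
  have hv := S.shift_mul_compl_nonneg ha l
  rw [Algebra.algebraMap_eq_smul_one] at hv
  obtain ⟨h1, h2⟩ := S.specProj_mul_of_le ha h
  exact S.est_abstract ha (S.specProj_mem ha l') (S.specProj_mem ha l)
    (S.specProj_idem ha l') (S.specProj_idem ha l) h1 h2
    (S.specProj_comm_self ha l').symm (S.specProj_comm_self ha l).symm hu hv

end SynapticAlgebra

end Toolkit

/-- For commuting `a, b`, the synaptic and spectral orders agree. -/
theorem le_iff_specLE_of_commute {R : Type*} [Ring R] [Algebra ℝ R]
    (S : SynapticAlgebra R) (a b : R) (ha : a ∈ S.A) (hb : b ∈ S.A)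
    (hcomm : a * b = b * a) :
    S.le a b ↔ S.specLE a b := by
  constructor
  · -- synaptic order implies spectral order (using commutativity)
    intro hle l
    set f := S.specProj b l with hfdef
    have hfm : f ∈ S.A := S.specProj_mem hb l
    have hff : f * f = f := S.specProj_idem hb l
    have hfb : b * f = f * b := (S.specProj_comm_self hb l).symm
    have hfa : a * f = f * a := (S.specProj_comm hb ha hcomm.symm l).symm
    -- (a - λ)·f ≤ 0
    have hdf : S.le ((b - algebraMap ℝ R l) * f) 0 := S.shift_mul_specProj_nonpos hb l
    have hbaf : S.le 0 ((b - a) * f) := by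
      apply S.comm_mul_nonneg (S.A.sub_mem hb ha) hfm
        (S.sub_nonneg_of_le ha hb hle) (S.specProj_nn hb l)
      rw [sub_mul, mul_sub, hfa, hfb]
    have hcf : S.le ((a - algebraMap ℝ R l) * f) 0 := by
      have e : (a - algebraMap ℝ R l) * f
          = (b - algebraMap ℝ R l) * f + (-((b - a) * f)) := by noncomm_ring
      rw [e]
      have hm1 : (b - algebraMap ℝ R l) * f ∈ S.A := by
        apply S.comm_mul_mem (S.shift_mem hb l) hfm
        rw [Algebra.algebraMap_eq_smul_one, sub_mul, mul_sub, hfb, smul_mul_assoc,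
          mul_smul_comm, one_mul, mul_one]
      have hm2 : (b - a) * f ∈ S.A := by
        apply S.comm_mul_mem (S.A.sub_mem hb ha) hfm
        rw [sub_mul, mul_sub, hfa, hfb]
      have t2 : S.le (-((b - a) * f)) 0 := by
        apply S.nonpos_of_neg_nonneg (S.A.neg_mem hm2)
        rwa [neg_neg]
      have := S.add_le_add' hm1 S.A.zero_mem (S.A.neg_mem hm2) S.A.zero_mem hdf t2
      simpa using this
    have hQf : S.carr (S.pospart (a - algebraMap ℝ R l)) * f = 0 :=
      S.carr_pospart_mul_eq_zero ha hfm hff hfa l hcf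
    have hfQ : f * S.carr (S.pospart (a - algebraMap ℝ R l)) = 0 := by
      have hc : a - algebraMap ℝ R l ∈ S.A := S.shift_mem ha l
      have hcf' : (a - algebraMap ℝ R l) * f = f * (a - algebraMap ℝ R l) := by
        rw [Algebra.algebraMap_eq_smul_one, sub_mul, mul_sub, hfa, smul_mul_assoc,
          mul_smul_comm, one_mul, mul_one]
      have := S.carr_comm (S.pospart_mem hc) hfm (S.pospart_comm hc hfm hcf')
      rw [← this]
      exact hQf
    -- f ≤ specProj a l
    apply S.proj_le_of_mul hfm (S.specProj_mem ha l) hff (S.specProj_idem ha l)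
    · show f * S.specProj a l = f
      show f * (1 - S.carr (S.pospart (a - algebraMap ℝ R l))) = f
      rw [mul_sub, mul_one, hfQ, sub_zero]
    · show S.specProj a l * f = f
      show (1 - S.carr (S.pospart (a - algebraMap ℝ R l))) * f = f
      rw [sub_mul, one_mul, hQf, sub_zero]
  · -- spectral order implies synaptic order
    intro hs
    have hs' : ∀ l : ℝ, S.le (S.specProj b l) (S.specProj a l) := hs
    apply S.le_of_forall_eps ha hb
    intro ε hε
    obtain ⟨Ma, hMa0, hMa1, hMa2⟩ := S.bound_exists ha
    obtain ⟨Mb, hMb0, hMb1, hMb2⟩ := S.bound_exists hb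
    set M := max Ma Mb with hM
    have hMpos : 0 < M := lt_of_lt_of_le hMa0 (le_max_left _ _)
    have h1m : (1 : R) ∈ S.A := S.one_mem
    have hsm : ∀ r : ℝ, r • (1 : R) ∈ S.A := fun r => S.A.smul_mem _ h1m
    have hup : ∀ {c Mc : ℝ → ℝ}, True := fun {_ _} => trivial
    have haM : S.le a (M • 1) :=
      S.trans' ha (hsm Ma) (hsm M) hMa1 (S.smul_one_le_smul_one (le_max_left _ _))
    have haM' : S.le ((-M) • 1) a :=
      S.trans' (hsm (-M)) (hsm (-Ma)) ha
        (S.smul_one_le_smul_one (by simp only [neg_le_neg_iff]; exact le_max_left _ _))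
        hMa2
    have hbM : S.le b (M • 1) :=
      S.trans' hb (hsm Mb) (hsm M) hMb1 (S.smul_one_le_smul_one (le_max_right _ _))
    have hbM' : S.le ((-M) • 1) b :=
      S.trans' (hsm (-M)) (hsm (-Mb)) hb
        (S.smul_one_le_smul_one (by simp only [neg_le_neg_iff]; exact le_max_right _ _))
        hMb2
    set N := ⌈(2 * M + ε) / ε⌉₊ with hNdef
    set μ : ℕ → ℝ := fun i => -M - ε + i * ε with hμ
    have hμsucc : ∀ i : ℕ, μ (i + 1) = μ i + ε := by
      intro i
      simp only [hμ]
      push_cast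
      ring
    have hμmono : ∀ i : ℕ, μ i ≤ μ (i + 1) := by
      intro i
      rw [hμsucc i]
      linarith
    have hμN : M ≤ μ N := by
      have h1 : (2 * M + ε) / ε ≤ (N : ℝ) := Nat.le_ceil _
      have h2 : 2 * M + ε ≤ (N : ℝ) * ε := by
        rw [div_le_iff₀ hε] at h1
        linarith
      simp only [hμ]
      linarith
    have hμ0 : μ 0 < -M := by
      simp only [hμ]
      push_cast
      linarith
    -- the spectral families
    have heN : S.specProj a (μ N) = 1 :=
      S.specProj_eq_one ha (S.trans' ha (hsm M) (hsm (μ N)) haM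
        (S.smul_one_le_smul_one hμN))
    have he0 : S.specProj a (μ 0) = 0 := S.specProj_eq_zero ha hμ0 haM'
    have hfN : S.specProj b (μ N) = 1 :=
      S.specProj_eq_one hb (S.trans' hb (hsm M) (hsm (μ N)) hbM
        (S.smul_one_le_smul_one hμN))
    have hf0 : S.specProj b (μ 0) = 0 := S.specProj_eq_zero hb hμ0 hbM'
    have hem : ∀ i : ℕ, S.specProj a (μ i) ∈ S.A := fun i => S.specProj_mem ha (μ i)
    have hfm : ∀ i : ℕ, S.specProj b (μ i) ∈ S.A := fun i => S.specProj_mem hb (μ i)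
    -- upper bound for a
    have hUa : S.le a (∑ i ∈ Finset.range N,
        (μ (i + 1)) • (S.specProj a (μ (i + 1)) - S.specProj a (μ i))) := by
      have h1 : a = ∑ i ∈ Finset.range N,
          a * (S.specProj a (μ (i + 1)) - S.specProj a (μ i)) := by
        rw [← Finset.mul_sum,
          Finset.sum_range_sub (fun i => S.specProj a (μ i)), heN, he0, sub_zero,
          mul_one]
      have h2 : S.le (∑ i ∈ Finset.range N,
          a * (S.specProj a (μ (i + 1)) - S.specProj a (μ i)))
          (∑ i ∈ Finset.range N,
          (μ (i + 1)) • (S.specProj a (μ (i + 1)) - S.specProj a (μ i))) := by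
        apply S.le_sum
        · intro i
          apply S.comm_mul_mem ha (S.A.sub_mem (hem (i+1)) (hem i))
          rw [mul_sub, sub_mul, S.specProj_comm_self ha (μ (i+1)),
            S.specProj_comm_self ha (μ i)]
        · intro i
          exact S.A.smul_mem _ (S.A.sub_mem (hem (i+1)) (hem i))
        · intro i _
          exact (S.est_bounds ha (hμmono i)).2
      rwa [← h1] at h2
    -- lower bound for b
    have hLb : S.le (∑ i ∈ Finset.range N,
        (μ i) • (S.specProj b (μ (i + 1)) - S.specProj b (μ i))) b := by
      have h1 : b = ∑ i ∈ Finset.range N,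
          b * (S.specProj b (μ (i + 1)) - S.specProj b (μ i)) := by
        rw [← Finset.mul_sum,
          Finset.sum_range_sub (fun i => S.specProj b (μ i)), hfN, hf0, sub_zero,
          mul_one]
      have h2 : S.le (∑ i ∈ Finset.range N,
          (μ i) • (S.specProj b (μ (i + 1)) - S.specProj b (μ i)))
          (∑ i ∈ Finset.range N,
          b * (S.specProj b (μ (i + 1)) - S.specProj b (μ i))) := by
        apply S.le_sum
        · intro i
          exact S.A.smul_mem _ (S.A.sub_mem (hfm (i+1)) (hfm i))
        · intro i
          apply S.comm_mul_mem hb (S.A.sub_mem (hfm (i+1)) (hfm i))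
          rw [mul_sub, sub_mul, S.specProj_comm_self hb (μ (i+1)),
            S.specProj_comm_self hb (μ i)]
        · intro i _
          exact (S.est_bounds hb (hμmono i)).1
      rwa [← h1] at h2
    -- Abel summation for the upper sum
    have hUeq : (∑ i ∈ Finset.range N,
        (μ (i + 1)) • (S.specProj a (μ (i + 1)) - S.specProj a (μ i)))
        = (μ N) • (1 : R) - ε • ∑ i ∈ Finset.range N, S.specProj a (μ i) := by
      have hterm : ∀ i ∈ Finset.range N,
          (μ (i + 1)) • (S.specProj a (μ (i + 1)) - S.specProj a (μ i))
          = ((μ (i+1)) • S.specProj a (μ (i+1)) - (μ i) • S.specProj a (μ i))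
            - ε • S.specProj a (μ i) := by
        intro i _
        have key : ∀ (r s : ℝ), r = s + ε → ∀ u v : R,
            r • (u - v) = (r • u - s • v) - ε • v := by
          intro r s h u v
          rw [h]
          module
        exact key (μ (i+1)) (μ i) (hμsucc i) _ _
      rw [Finset.sum_congr rfl hterm, Finset.sum_sub_distrib,
        Finset.sum_range_sub (fun i => (μ i) • S.specProj a (μ i)), heN, he0,
        smul_zero, sub_zero, ← Finset.smul_sum]
    -- Abel summation for the lower sum
    have hLeq : (∑ i ∈ Finset.range N,
        (μ i) • (S.specProj b (μ (i + 1)) - S.specProj b (μ i)))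
        = (μ N) • (1 : R) - ε • ∑ i ∈ Finset.range N, S.specProj b (μ i) - ε • 1 := by
      have hterm : ∀ i ∈ Finset.range N,
          (μ i) • (S.specProj b (μ (i + 1)) - S.specProj b (μ i))
          = ((μ (i+1)) • S.specProj b (μ (i+1)) - (μ i) • S.specProj b (μ i))
            - ε • S.specProj b (μ (i+1)) := by
        intro i _
        have key : ∀ (r s : ℝ), r = s + ε → ∀ u v : R,
            s • (u - v) = (r • u - s • v) - ε • u := by
          intro r s h u v
          rw [h]
          module
        exact key (μ (i+1)) (μ i) (hμsucc i) _ _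
      rw [Finset.sum_congr rfl hterm, Finset.sum_sub_distrib,
        Finset.sum_range_sub (fun i => (μ i) • S.specProj b (μ i)), hfN, hf0,
        smul_zero, sub_zero]
      have hshift : (∑ i ∈ Finset.range N, S.specProj b (μ (i + 1)))
          = (∑ i ∈ Finset.range N, S.specProj b (μ i)) + 1 := by
        have h0 := Finset.sum_range_succ' (fun i => S.specProj b (μ i)) N
        have h1 := Finset.sum_range_succ (fun i => S.specProj b (μ i)) N
        rw [h1, hfN, hf0, add_zero] at h0
        exact h0.symm
      rw [← Finset.smul_sum, hshift, smul_add]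
      abel
    -- compare the sums
    have hsum_blea : S.le (∑ i ∈ Finset.range N, S.specProj b (μ i))
        (∑ i ∈ Finset.range N, S.specProj a (μ i)) :=
      S.le_sum hfm hem (fun i _ => hs' (μ i))
    have hmemsa : (∑ i ∈ Finset.range N, S.specProj a (μ i)) ∈ S.A :=
      S.A.sum_mem fun i _ => hem i
    have hmemsb : (∑ i ∈ Finset.range N, S.specProj b (μ i)) ∈ S.A :=
      S.A.sum_mem fun i _ => hfm i
    -- U ≤ L + ε•1
    have hcomp : S.le ((μ N) • (1 : R) - ε • ∑ i ∈ Finset.range N, S.specProj a (μ i))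
        (((μ N) • (1 : R) - ε • ∑ i ∈ Finset.range N, S.specProj b (μ i) - ε • 1) + ε • 1) := by
      have e : ((μ N) • (1 : R) - ε • ∑ i ∈ Finset.range N, S.specProj b (μ i) - ε • 1) + ε • 1
          = (μ N) • (1 : R) - ε • ∑ i ∈ Finset.range N, S.specProj b (μ i) := by abel
      rw [e]
      apply S.le_of_sub_nonneg
        (S.A.sub_mem (hsm (μ N)) (S.A.smul_mem _ hmemsa))
        (S.A.sub_mem (hsm (μ N)) (S.A.smul_mem _ hmemsb))
      have e2 : (μ N) • (1 : R) - ε • (∑ i ∈ Finset.range N, S.specProj b (μ i))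
          - ((μ N) • (1 : R) - ε • ∑ i ∈ Finset.range N, S.specProj a (μ i))
          = ε • ((∑ i ∈ Finset.range N, S.specProj a (μ i))
              - ∑ i ∈ Finset.range N, S.specProj b (μ i)) := by
        rw [smul_sub]
        abel
      rw [e2]
      exact S.smul_nonneg' hε.le (S.A.sub_mem hmemsa hmemsb)
        (S.sub_nonneg_of_le hmemsb hmemsa hsum_blea)
    rw [hUeq] at hUa
    rw [hLeq] at hLb
    -- chain everything
    have hbend : S.le (((μ N) • (1 : R) - ε • ∑ i ∈ Finset.range N, S.specProj b (μ i) - ε • 1) + ε • 1)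
        (b + ε • 1) := by
      apply S.add_le_add'
        (S.A.sub_mem (S.A.sub_mem (hsm (μ N)) (S.A.smul_mem _ hmemsb)) (hsm ε))
        hb (hsm ε) (hsm ε) hLb (S.le_refl' (hsm ε))
    have m1 : (μ N) • (1 : R) - ε • ∑ i ∈ Finset.range N, S.specProj a (μ i) ∈ S.A :=
      S.A.sub_mem (hsm (μ N)) (S.A.smul_mem _ hmemsa)
    have m2 : ((μ N) • (1 : R) - ε • ∑ i ∈ Finset.range N, S.specProj b (μ i) - ε • 1) + ε • 1 ∈ S.A :=
      S.A.add_mem (S.A.sub_mem (S.A.sub_mem (hsm (μ N)) (S.A.smul_mem _ hmemsb)) (hsm ε)) (hsm ε)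
    exact S.trans' ha m2 (S.A.add_mem hb (hsm ε))
      (S.trans' ha m1 m2 hUa hcomp) hbend
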